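/- arXiv:1804.05058 — 5 statements merged into one kernel-verified Lean document; each statement's English description precedes it below -/
import Mathlib

section
/- Let n, f, m ≥ 1 and let G be a unitary on ℂⁿ ⊗ ℂ^f ⊗ ℂᵐ. Let ψ := G(e₀ ⊗ e₀ ⊗ e₀) and define the n × n matrix ϱ by ϱ_{ij} := Σ_{k<m} ψ(i, 0, k) · conj(ψ(j, 0, k)) (the subnormalized density operator obtained from the purification ψ by projecting the second register onto e₀ and tracing out the third register). Let SWAP denote the unitary on (ℂⁿ ⊗ ℂ^f) ⊗ (ℂⁿ ⊗ ℂ^f) ⊗ ℂᵐ that swaps the first two (ℂⁿ ⊗ ℂ^f) factors and acts as identity on ℂᵐ. Define V := (I_{n·f} ⊗ G†) · SWAP · (I_{n·f} ⊗ G), a unitary on ℂⁿ ⊗ ℂ^f ⊗ ℂⁿ ⊗ ℂ^f ⊗ ℂᵐ. Then for all i, j: ⟨e_i ⊗ e₀ ⊗ e₀ ⊗ e₀ ⊗ e₀, V(e_j ⊗ e₀ ⊗ e₀ ⊗ e₀ ⊗ e₀)⟩ = ϱ_{ij}; that is, the top-left n×n block of V, with all registers other than the first ℂⁿ projected onto their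 first basis state, equals ϱ exactly (so V is an exact block-encoding of ϱ). -/
open Matrix Kronecker BigOperators

/-!
The entry of `(1 ⊗ Gᴴ) · SWAP · (1 ⊗ G)` at `((a, p), (a', p'))` is `∑ b, G (a, b) p' · conj G (a', b) p`:
the swap sandwiched between `G` and `Gᴴ` computes the partial trace over the environment register
of `G |p'⟩⟨p| Gᴴ`. Taking `p = p'` to be the initial basis state, this is the reduced state of `ψ`.
-/

namespace Matrix

/-- The permutation matrix of `(a, (a', b)) ↦ (a', (a, b))`. -/
def swapFirstTwo (α β R : Type*) [DecidableEq α] [DecidableEq β] [Zero R] [One R] :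
    Matrix (α × (α × β)) (α × (α × β)) R :=
  of fun x y => if x.1 = y.2.1 ∧ x.2.1 = y.1 ∧ x.2.2 = y.2.2 then 1 else 0

theorem swapFirstTwo_mul_apply {α β γ R : Type*} [Fintype α] [Fintype β] [DecidableEq α]
    [DecidableEq β] [NonAssocSemiring R] (N : Matrix (α × (α × β)) γ R)
    (a : α) (q : α × β) (y : γ) :
    (swapFirstTwo α β R * N) (a, q) y = N (q.1, (a, q.2)) y := by
  rw [mul_apply, Fintype.sum_eq_single (q.1, (a, q.2))]
  · simp [swapFirstTwo]
  · rintro ⟨a', a'', b'⟩ hne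
    rw [swapFirstTwo, of_apply, if_neg, zero_mul]
    rintro ⟨rfl, rfl, rfl⟩
    exact hne rfl

theorem one_kronecker_mul_apply {ι β γ R : Type*} [Fintype ι] [Fintype β] [DecidableEq ι]
    [NonAssocSemiring R] (A : Matrix β β R) (N : Matrix (ι × β) γ R) (i : ι) (p : β) (y : γ) :
    ((1 : Matrix ι ι R) ⊗ₖ A * N) (i, p) y = ∑ q, A p q * N (i, q) y := by
  simp [mul_apply, Fintype.sum_prod_type, one_apply, ite_mul]

theorem one_kronecker_conjTranspose_mul_swapFirstTwo_mul_apply {α β R : Type*} [Fintype α]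
    [Fintype β] [DecidableEq α] [DecidableEq β] [CommSemiring R] [Star R]
    (G : Matrix (α × β) (α × β) R) (a a' : α) (p p' : α × β) :
    ((1 : Matrix α α R) ⊗ₖ Gᴴ * swapFirstTwo α β R * ((1 : Matrix α α R) ⊗ₖ G))
        (a, p) (a', p') =
      ∑ b, G (a, b) p' * star (G (a', b) p) := by
  simp only [Matrix.mul_assoc, one_kronecker_mul_apply, swapFirstTwo_mul_apply,
    kroneckerMap_apply, one_apply, ite_mul, one_mul, zero_mul, conjTranspose_apply,
    Fintype.sum_prod_type, mul_ite, mul_zero, Finset.sum_ite_irrel, Finset.sum_const_zero,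
    Finset.sum_ite_eq', Finset.mem_univ, if_true]
  exact Finset.sum_congr rfl fun b _ => mul_comm _ _

end Matrix

theorem exact_block_encoding_from_purification_general
    (n f m : ℕ) [NeZero n] [NeZero f] [NeZero m]
    (G : Matrix ((Fin n × Fin f) × Fin m) ((Fin n × Fin f) × Fin m) ℂ)
    (ψ : ((Fin n × Fin f) × Fin m) → ℂ)
    (hψ : ψ = G.mulVec (fun p => if p = ((0, 0), 0) then (1 : ℂ) else 0))
    (ϱ : Matrix (Fin n) (Fin n) ℂ)
    (hϱ : ϱ = Matrix.of fun i j : Fin n =>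
        ∑ k : Fin m, ψ ((i, 0), k) * (starRingEnd ℂ) (ψ ((j, 0), k)))
    (SWAP : Matrix ((Fin n × Fin f) × ((Fin n × Fin f) × Fin m))
        ((Fin n × Fin f) × ((Fin n × Fin f) × Fin m)) ℂ)
    (hSWAP : SWAP = Matrix.of
        fun x y : (Fin n × Fin f) × ((Fin n × Fin f) × Fin m) =>
        if x.1 = y.2.1 ∧ x.2.1 = y.1 ∧ x.2.2 = y.2.2 then (1 : ℂ) else 0)
    (V : Matrix ((Fin n × Fin f) × ((Fin n × Fin f) × Fin m))
        ((Fin n × Fin f) × ((Fin n × Fin f) × Fin m)) ℂ)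
    (hV : V = ((1 : Matrix (Fin n × Fin f) (Fin n × Fin f) ℂ) ⊗ₖ Gᴴ) * SWAP *
        ((1 : Matrix (Fin n × Fin f) (Fin n × Fin f) ℂ) ⊗ₖ G)) :
    ∀ i j : Fin n, V ((i, 0), ((0, 0), 0)) ((j, 0), ((0, 0), 0)) = ϱ i j := by
  intro i j
  have hψ_col : ψ = G.col ((0, 0), 0) := by
    rw [hψ, ← mulVec_single_one]
    congr 1
    funext p
    exact (Pi.single_apply _ _ p).symm
  have hSWAP_def : SWAP = swapFirstTwo (Fin n × Fin f) (Fin m) ℂ := hSWAP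
  rw [hV, hSWAP_def, one_kronecker_conjTranspose_mul_swapFirstTwo_mul_apply, hϱ, hψ_col]
  rfl

theorem exact_block_encoding_from_purification
    (n f m : ℕ) [NeZero n] [NeZero f] [NeZero m]
    (G : Matrix ((Fin n × Fin f) × Fin m) ((Fin n × Fin f) × Fin m) ℂ)
    (hG : G ∈ Matrix.unitaryGroup ((Fin n × Fin f) × Fin m) ℂ)
    (ψ : ((Fin n × Fin f) × Fin m) → ℂ)
    (hψ : ψ = G.mulVec (fun p => if p = ((0, 0), 0) then (1 : ℂ) else 0))
    (ϱ : Matrix (Fin n) (Fin n) ℂ)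
    (hϱ : ϱ = Matrix.of fun i j : Fin n =>
        ∑ k : Fin m, ψ ((i, 0), k) * (starRingEnd ℂ) (ψ ((j, 0), k)))
    (SWAP : Matrix ((Fin n × Fin f) × ((Fin n × Fin f) × Fin m))
        ((Fin n × Fin f) × ((Fin n × Fin f) × Fin m)) ℂ)
    (hSWAP : SWAP = Matrix.of
        fun x y : (Fin n × Fin f) × ((Fin n × Fin f) × Fin m) =>
        if x.1 = y.2.1 ∧ x.2.1 = y.1 ∧ x.2.2 = y.2.2 then (1 : ℂ) else 0)
    (V : Matrix ((Fin n × Fin f) × ((Fin n × Fin f) × Fin m))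
        ((Fin n × Fin f) × ((Fin n × Fin f) × Fin m)) ℂ)
    (hV : V = ((1 : Matrix (Fin n × Fin f) (Fin n × Fin f) ℂ) ⊗ₖ Gᴴ) * SWAP *
        ((1 : Matrix (Fin n × Fin f) (Fin n × Fin f) ℂ) ⊗ₖ G)) :
    ∀ i j : Fin n, V ((i, 0), ((0, 0), 0)) ((j, 0), ((0, 0), 0)) = ϱ i j :=
  exact_block_encoding_from_purification_general n f m G ψ hψ ϱ hϱ SWAP hSWAP V hV
end

section
/- Let ϱ⁺, ϱ⁻ ∈ M_n(ℂ) be positive semidefinite matrices, let H := (ϱ⁺ − ϱ⁻)/2 (a Hermitian matrix), let ς⁺ := (ϱ⁺ + ϱ⁻)/2, and let q ∈ ℝ. Write a spectral decomposition H = Σᵢ λᵢ vᵢ vᵢ† with orthonormal eigenvectors vᵢ and real eigenvalues λᵢ (e.g. via the spectral theorem for Hermitian matrices), and define the spectral projector Π := Σ_{i : λᵢ > q} vᵢ vᵢ†. Then q·Π ⪯ Π · ς⁺ · Π, i.e. the matrix Π ς⁺ Π − q Π is positive semidefinite. -/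
/-!
Since `ς⁺ = ϱ⁻ + H`, the matrix `Π ς⁺ Π - q Π` is the sum of `Π ϱ⁻ Π`, which is psd
because `Π` is Hermitian, and `Π H Π - q Π`. The projector `Π` is `χ(H)` for the indicator
`χ` of `(q, ∞)`, so by the functional calculus `Π H Π - q Π = f(H)` with
`f x = χ x * (x - q) ≥ 0`.
-/

open Matrix BigOperators
open scoped ComplexOrder MatrixOrder

namespace Matrix

variable {m α : Type*} [Fintype m] [DecidableEq m] [CommSemiring α] [StarRing α]

theorem mul_diagonal_mul_star_eq_sum_vecMulVec (U : Matrix m m α) (d : m → α) :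
    U * diagonal d * star U = ∑ i, d i • vecMulVec (fun a => U a i) (star fun a => U a i) := by
  ext a b
  rw [mul_apply]
  simp only [mul_diagonal, star_apply, sum_apply, smul_apply, vecMulVec_apply, Pi.star_apply,
    smul_eq_mul]
  exact Finset.sum_congr rfl fun i _ => by ring

end Matrix

section SpectralProjector

variable {A : Type*} [Ring A] [StarRing A] [TopologicalSpace A] [Algebra ℝ A]
  [ContinuousFunctionalCalculus ℝ A IsSelfAdjoint]

noncomputable def spectralProjectorAbove (q : ℝ) (a : A) : A :=
  cfc ((Set.Ioi q).indicator (1 : ℝ → ℝ)) a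

theorem isSelfAdjoint_spectralProjectorAbove (q : ℝ) (a : A) :
    IsSelfAdjoint (spectralProjectorAbove q a) :=
  cfc_predicate _ a

theorem smul_spectralProjectorAbove_le [PartialOrder A] [StarOrderedRing A] {a : A}
    (ha : IsSelfAdjoint a) (q : ℝ)
    (hχ : ContinuousOn ((Set.Ioi q).indicator (1 : ℝ → ℝ)) (spectrum ℝ a)) :
    q • spectralProjectorAbove q a ≤
      spectralProjectorAbove q a * a * spectralProjectorAbove q a := by
  set χ : ℝ → ℝ := (Set.Ioi q).indicator 1
  have hcfc :
      cfc χ a * a * cfc χ a - q • cfc χ a = cfc (fun x => χ x * x * χ x - q • χ x) a := by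
    rw [cfc_sub _ _ a, cfc_mul _ _ a, cfc_mul _ _ a, cfc_id' ℝ a, cfc_smul q χ a]
  rw [← sub_nonneg, spectralProjectorAbove, hcfc]
  refine cfc_nonneg fun x _ => ?_
  by_cases hx : q < x <;> simp [χ, hx]; linarith

end SpectralProjector

namespace Matrix.IsHermitian

variable {m 𝕜 : Type*} [Fintype m] [DecidableEq m] [RCLike 𝕜] {A : Matrix m m 𝕜}

theorem spectralProjectorAbove_eq_sum (hA : A.IsHermitian) (q : ℝ) :
    spectralProjectorAbove q A = ∑ i ∈ Finset.univ.filter (fun i => q < hA.eigenvalues i),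
      vecMulVec (fun a => (hA.eigenvectorUnitary : Matrix m m 𝕜) a i)
        (star fun a => (hA.eigenvectorUnitary : Matrix m m 𝕜) a i) := by
  rw [spectralProjectorAbove, hA.cfc_eq, IsHermitian.cfc, Unitary.conjStarAlgAut_apply,
    mul_diagonal_mul_star_eq_sum_vecMulVec, Finset.sum_filter]
  refine Finset.sum_congr rfl fun i _ => ?_
  by_cases hi : q < hA.eigenvalues i <;> simp [hi]

end Matrix.IsHermitian

theorem spectral_projector_loewner_bound_general
    (n : ℕ) (ϱp ϱm : Matrix (Fin n) (Fin n) ℂ)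
    (hϱm : ϱm.PosSemidef)
    (H ςp : Matrix (Fin n) (Fin n) ℂ)
    (hHdef : H = (2 : ℂ)⁻¹ • (ϱp - ϱm))
    (hςp : ςp = (2 : ℂ)⁻¹ • (ϱp + ϱm))
    (hH : H.IsHermitian) (q : ℝ)
    (Prj : Matrix (Fin n) (Fin n) ℂ)
    (hPrj : Prj = ∑ i ∈ Finset.univ.filter (fun i => q < hH.eigenvalues i),
        Matrix.vecMulVec
          (fun a => (hH.eigenvectorUnitary : Matrix (Fin n) (Fin n) ℂ) a i)
          (star fun a => (hH.eigenvectorUnitary : Matrix (Fin n) (Fin n) ℂ) a i)) :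
    (Prj * ςp * Prj - (q : ℂ) • Prj).PosSemidef := by
  have hςp_eq : ςp = ϱm + H := by rw [hςp, hHdef]; module
  rw [← hH.spectralProjectorAbove_eq_sum] at hPrj
  have hPrj_herm : Prjᴴ = Prj := hPrj ▸ isSelfAdjoint_spectralProjectorAbove q H
  have hH_part : (Prj * H * Prj - (q : ℂ) • Prj).PosSemidef := by
    rw [Complex.coe_smul, ← le_iff, hPrj]
    exact smul_spectralProjectorAbove_le hH.isSelfAdjoint q (H.finite_real_spectrum.continuousOn _)
  have hsplit : Prj * ςp * Prj - (q : ℂ) • Prj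
      = Prj * ϱm * Prjᴴ + (Prj * H * Prj - (q : ℂ) • Prj) := by
    rw [hPrj_herm, hςp_eq]; noncomm_ring
  rw [hsplit]
  exact (hϱm.mul_mul_conjTranspose_same Prj).add hH_part

theorem spectral_projector_loewner_bound
    (n : ℕ) (ϱp ϱm : Matrix (Fin n) (Fin n) ℂ)
    (hϱp : ϱp.PosSemidef) (hϱm : ϱm.PosSemidef)
    (H ςp : Matrix (Fin n) (Fin n) ℂ)
    (hHdef : H = (2 : ℂ)⁻¹ • (ϱp - ϱm))
    (hςp : ςp = (2 : ℂ)⁻¹ • (ϱp + ϱm))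
    (hH : H.IsHermitian) (q : ℝ)
    (Prj : Matrix (Fin n) (Fin n) ℂ)
    (hPrj : Prj = ∑ i ∈ Finset.univ.filter (fun i => q < hH.eigenvalues i),
        Matrix.vecMulVec
          (fun a => (hH.eigenvectorUnitary : Matrix (Fin n) (Fin n) ℂ) a i)
          (star fun a => (hH.eigenvectorUnitary : Matrix (Fin n) (Fin n) ℂ) a i)) :
    (Prj * ςp * Prj - (q : ℂ) • Prj).PosSemidef :=
  spectral_projector_loewner_bound_general n ϱp ϱm hϱm H ςp hHdef hςp hH q Prj hPrj
end

section
/- Let n ≥ 2 and let H ∈ M_n(ℂ) be Hermitian with eigenvalues λ₁,…,λₙ (listed with multiplicity) satisfying Σᵢ |λᵢ| ≤ 1. Let β ≥ 1 and let q be a real number with 2/n ≤ q ≤ 1/β. Then Σ_{i : λᵢ ≤ q} exp(β·λᵢ) ≥ n/(2e); equivalently, tr(Π_{H ≤ q} · e^{βH}) ≥ n/(2e), where Π_{H ≤ q} is the spectral projector of H onto eigenvalues at most q. -/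
open Matrix BigOperators

/-!
At most `1 / q` of the eigenvalues can exceed `q` in absolute value, since their absolute values
sum to at most `1`; as `q ≥ 2 / n`, at least half of them lie in `[-q, q]`. Each of those
contributes at least `exp (-β q) ≥ exp (-1)` to the sum.
-/

open Finset

variable {ι : Type*} [Fintype ι]

theorem mul_card_filter_lt_abs_le_sum_abs (f : ι → ℝ) (q : ℝ) :
    q * #{i | q < |f i|} ≤ ∑ i, |f i| :=
  calc q * #{i | q < |f i|} = #{i | q < |f i|} • q := by rw [nsmul_eq_mul, mul_comm]
    _ ≤ ∑ i ∈ {i | q < |f i|}, |f i| :=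
      card_nsmul_le_sum _ _ _ fun i hi => (mem_filter.mp hi).2.le
    _ ≤ ∑ i, |f i| :=
      sum_le_sum_of_subset_of_nonneg (filter_subset _ _) fun i _ _ => abs_nonneg _

theorem card_le_two_mul_card_filter_abs_le {f : ι → ℝ} (hf : ∑ i, |f i| ≤ 1) {q : ℝ}
    (hq : 2 / (Fintype.card ι : ℝ) ≤ q) :
    (Fintype.card ι : ℝ) ≤ 2 * #{i | |f i| ≤ q} := by
  rcases (Fintype.card ι).eq_zero_or_pos with hι | hι
  · simp [hι]
  have hcard : (#{i | |f i| ≤ q} : ℝ) + #{i | q < |f i|} = Fintype.card ι := by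
    simp only [← not_le]
    exact_mod_cast card_filter_add_card_filter_not (fun i => |f i| ≤ q)
  have hn : (0 : ℝ) < Fintype.card ι := by exact_mod_cast hι
  have hqn : 2 ≤ q * Fintype.card ι := (div_le_iff₀ hn).mp hq
  have hq0 : 0 < q := lt_of_lt_of_le (by positivity) hq
  have hmarkov := (mul_card_filter_lt_abs_le_sum_abs f q).trans hf
  nlinarith

theorem card_mul_exp_neg_one_le_sum_exp {f : ι → ℝ} {β q : ℝ} (hβ : 0 ≤ β)
    (hβq : β * q ≤ 1) :
    #{i | |f i| ≤ q} * Real.exp (-1) ≤ ∑ i ∈ {i | f i ≤ q}, Real.exp (β * f i) :=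
  calc #{i | |f i| ≤ q} * Real.exp (-1) = #{i | |f i| ≤ q} • Real.exp (-1) :=
        (nsmul_eq_mul _ _).symm
    _ ≤ ∑ i ∈ {i | |f i| ≤ q}, Real.exp (β * f i) := card_nsmul_le_sum _ _ _ fun i hi => by
      have hfi := (abs_le.mp (mem_filter.mp hi).2).1
      exact Real.exp_le_exp.mpr (by nlinarith)
    _ ≤ ∑ i ∈ {i | f i ≤ q}, Real.exp (β * f i) :=
      sum_le_sum_of_subset_of_nonneg (monotone_filter_right _ fun _ _ h => (abs_le.mp h).2)
        fun i _ _ => (Real.exp_pos _).le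

theorem card_div_two_mul_exp_one_le_sum_exp {f : ι → ℝ} (hf : ∑ i, |f i| ≤ 1) {β q : ℝ}
    (hβ : 0 ≤ β) (hβq : β * q ≤ 1) (hq : 2 / (Fintype.card ι : ℝ) ≤ q) :
    (Fintype.card ι : ℝ) / (2 * Real.exp 1) ≤
      ∑ i ∈ {i | f i ≤ q}, Real.exp (β * f i) := by
  refine le_trans ?_ (card_mul_exp_neg_one_le_sum_exp hβ hβq)
  rw [Real.exp_neg, ← div_eq_mul_inv, ← div_div]
  gcongr
  linarith [card_le_two_mul_card_filter_abs_le hf hq]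

theorem gibbs_low_spectrum_trace_lower_bound_general
    (n : ℕ) (H : Matrix (Fin n) (Fin n) ℂ) (hH : H.IsHermitian)
    (htr : ∑ i, |hH.eigenvalues i| ≤ 1)
    (β q : ℝ) (hβ : 1 ≤ β) (hq₁ : 2 / (n : ℝ) ≤ q) (hq₂ : q ≤ 1 / β) :
    (n : ℝ) / (2 * Real.exp 1) ≤
      ∑ i ∈ Finset.univ.filter (fun i => hH.eigenvalues i ≤ q),
        Real.exp (β * hH.eigenvalues i) := by
  have hβ₀ : 0 < β := one_pos.trans_le hβ
  have hβq : β * q ≤ 1 := by rwa [le_div_iff₀ hβ₀, mul_comm] at hq₂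
  simpa using card_div_two_mul_exp_one_le_sum_exp htr hβ₀.le hβq (by simpa using hq₁)

theorem gibbs_low_spectrum_trace_lower_bound
    (n : ℕ) (hn : 2 ≤ n) (H : Matrix (Fin n) (Fin n) ℂ) (hH : H.IsHermitian)
    (htr : ∑ i, |hH.eigenvalues i| ≤ 1)
    (β q : ℝ) (hβ : 1 ≤ β) (hq₁ : 2 / (n : ℝ) ≤ q) (hq₂ : q ≤ 1 / β) :
    (n : ℝ) / (2 * Real.exp 1) ≤
      ∑ i ∈ Finset.univ.filter (fun i => hH.eigenvalues i ≤ q),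
        Real.exp (β * hH.eigenvalues i) :=
  gibbs_low_spectrum_trace_lower_bound_general n H hH htr β q hβ hq₁ hq₂
end

section
/- Let H ∈ M_n(ℂ) be Hermitian with eigenvalues λ₁,…,λₙ (listed with multiplicity) satisfying Σᵢ |λᵢ| ≤ 1, let β ≥ 1, and let 0 < η ≤ 1/(4β). Then the Lebesgue measure of the set {x ∈ [1/(2β), 1/β] : ∃ i, |x − |λᵢ|| ≤ η} is at most 8βη. Consequently, a point chosen uniformly at random from the interval [1/(2β), 1/β] has distance greater than η from every |λᵢ| with probability at least 1 − 16β²η. -/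
/-!
Only eigenvalues with `|λᵢ| ≥ 1/(4β)` can come within `η ≤ 1/(4β)` of the interval
`[1/(2β), 1/β]`, and since the `|λᵢ|` sum to at most `1` there are at most `4β` of them.
The bad set is therefore covered by at most `4β` intervals of length `2η`; its complement
in the interval, which has length `1/(2β)`, has relative measure at least `1 - 16β²η`.
-/

open MeasureTheory

open Finset in
theorem card_filter_le_abs_mul_le_sum_abs {ι : Type*} [Fintype ι] (a : ι → ℝ) (t : ℝ) :
    (#{i | t ≤ |a i|} : ℝ) * t ≤ ∑ i, |a i| :=
  calc (#{i | t ≤ |a i|} : ℝ) * t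
      ≤ ∑ i ∈ {i | t ≤ |a i|}, |a i| := by
        simpa [nsmul_eq_mul] using card_nsmul_le_sum _ (|a ·|) t fun i hi => (mem_filter.mp hi).2
    _ ≤ ∑ i, |a i| := sum_le_sum_of_subset_of_nonneg (subset_univ _) fun i _ _ => abs_nonneg _

theorem Real.volume_biUnion_closedBall_le {ι : Type*} (S : Finset ι) (c : ι → ℝ) (r : ℝ) :
    volume (⋃ i ∈ S, Metric.closedBall (c i) r) ≤ S.card * ENNReal.ofReal (2 * r) :=
  (measure_biUnion_finset_le S _).trans_eq <| by
    simp only [Real.volume_closedBall, Finset.sum_const, nsmul_eq_mul]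

theorem ofReal_one_sub_div_le_measure_not_div {α : Type*} [MeasurableSpace α]
    (μ : Measure α) (s : Set α) (p : α → Prop) {L b : ℝ} (hL : 0 < L) (hb : 0 ≤ b)
    (hs : μ s = ENNReal.ofReal L) (hp : μ {x | x ∈ s ∧ p x} ≤ ENNReal.ofReal b) :
    ENNReal.ofReal (1 - b / L) ≤ μ {x | x ∈ s ∧ ¬ p x} / μ s := by
  have hs₀ : μ s ≠ 0 := by simp [hs, hL]
  rw [ENNReal.le_div_iff_mul_le (Or.inl hs₀) (Or.inl (hs ▸ ENNReal.ofReal_ne_top))]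
  have hdiff : s \ {x | x ∈ s ∧ p x} = {x | x ∈ s ∧ ¬ p x} := by
    ext x; simp +contextual
  calc ENNReal.ofReal (1 - b / L) * μ s
      = ENNReal.ofReal L - ENNReal.ofReal b := by
        rw [hs, ← ENNReal.ofReal_mul' hL.le, ← ENNReal.ofReal_sub _ hb]
        congr 1; field_simp
    _ ≤ μ s - μ {x | x ∈ s ∧ p x} := by rw [hs]; exact tsub_le_tsub_left hp _
    _ ≤ μ {x | x ∈ s ∧ ¬ p x} := hdiff ▸ le_measure_sdiff

section

variable {ι : Type*} [Fintype ι] (a : ι → ℝ) {β η : ℝ}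

theorem subset_biUnion_closedBall_abs_of_le (hηβ : η ≤ 1 / (4 * β)) :
    {x : ℝ | x ∈ Set.Icc (1 / (2 * β)) (1 / β) ∧ ∃ i, abs (x - |a i|) ≤ η} ⊆
      ⋃ i ∈ ({i | 1 / (4 * β) ≤ |a i|} : Finset ι), Metric.closedBall |a i| η := by
  rintro x ⟨hx, i, hi⟩
  have hhalf : 1 / (2 * β) = 2 * (1 / (4 * β)) := by ring
  refine Set.mem_biUnion (Finset.mem_filter.mpr ⟨Finset.mem_univ i, ?_⟩) (by simpa [Real.dist_eq])
  linarith [hx.1, (abs_le.mp hi).2]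

theorem volume_near_abs_le (ha : ∑ i, |a i| ≤ 1) (hβ : 0 < β) (hη : 0 ≤ η)
    (hηβ : η ≤ 1 / (4 * β)) :
    volume {x : ℝ | x ∈ Set.Icc (1 / (2 * β)) (1 / β) ∧ ∃ i, abs (x - |a i|) ≤ η} ≤
      ENNReal.ofReal (8 * β * η) := by
  set S : Finset ι := {i | 1 / (4 * β) ≤ |a i|}
  have hS : (S.card : ℝ) ≤ 4 * β := by
    have := (card_filter_le_abs_mul_le_sum_abs a (1 / (4 * β))).trans ha
    rwa [mul_one_div, div_le_one (by positivity)] at this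
  calc _ ≤ volume (⋃ i ∈ S, Metric.closedBall |a i| η) :=
        measure_mono (subset_biUnion_closedBall_abs_of_le a hηβ)
    _ ≤ S.card * ENNReal.ofReal (2 * η) := Real.volume_biUnion_closedBall_le S _ η
    _ = ENNReal.ofReal (S.card * (2 * η)) := by
        rw [ENNReal.ofReal_mul (Nat.cast_nonneg _), ENNReal.ofReal_natCast]
    _ ≤ ENNReal.ofReal (8 * β * η) := ENNReal.ofReal_le_ofReal (by nlinarith)

end

theorem random_point_far_from_spectrum_general
    (n : Type*) [Fintype n] [DecidableEq n]
    (H : Matrix n n ℂ) (hH : H.IsHermitian)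
    (htr : ∑ i, |hH.eigenvalues i| ≤ 1)
    (β η : ℝ) (hη : 0 < η) (hη' : η ≤ 1 / (4 * β)) :
    volume {x : ℝ | x ∈ Set.Icc (1 / (2 * β)) (1 / β) ∧
        ∃ i, abs (x - abs (hH.eigenvalues i)) ≤ η} ≤ ENNReal.ofReal (8 * β * η) ∧
    ENNReal.ofReal (1 - 16 * β ^ 2 * η) ≤
      volume {x : ℝ | x ∈ Set.Icc (1 / (2 * β)) (1 / β) ∧
          ∀ i, η < abs (x - abs (hH.eigenvalues i))} /
        volume (Set.Icc (1 / (2 * β)) (1 / β)) := by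
  have hβ₀ : 0 < β := by linarith [one_div_pos.mp (hη.trans_le hη')]
  have hbad := volume_near_abs_le _ htr hβ₀ hη.le hη'
  have hlen : volume (Set.Icc (1 / (2 * β)) (1 / β)) = ENNReal.ofReal (1 / (2 * β)) := by
    rw [Real.volume_Icc]; congr 1; field_simp; ring
  refine ⟨hbad, ?_⟩
  have hratio : 16 * β ^ 2 * η = 8 * β * η / (1 / (2 * β)) := by field_simp; ring
  simpa only [hratio, not_exists, not_le] using
    ofReal_one_sub_div_le_measure_not_div volume _ _ (by positivity) (by positivity) hlen hbad

theorem random_point_far_from_spectrum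
    (n : Type*) [Fintype n] [DecidableEq n]
    (H : Matrix n n ℂ) (hH : H.IsHermitian)
    (htr : ∑ i, |hH.eigenvalues i| ≤ 1)
    (β η : ℝ) (hβ : 1 ≤ β) (hη : 0 < η) (hη' : η ≤ 1 / (4 * β)) :
    volume {x : ℝ | x ∈ Set.Icc (1 / (2 * β)) (1 / β) ∧
        ∃ i, abs (x - abs (hH.eigenvalues i)) ≤ η} ≤ ENNReal.ofReal (8 * β * η) ∧
    ENNReal.ofReal (1 - 16 * β ^ 2 * η) ≤
      volume {x : ℝ | x ∈ Set.Icc (1 / (2 * β)) (1 / β) ∧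
          ∀ i, η < abs (x - abs (hH.eigenvalues i))} /
        volume (Set.Icc (1 / (2 * β)) (1 / β)) :=
  random_point_far_from_spectrum_general n H hH htr β η hη hη'
end

section
/- Let A ∈ M_n(ℂ) be Hermitian with −I ⪯ A ⪯ I, and let N := (1/2) · (I/2 + A/4)^{1/2}, where (·)^{1/2} denotes the positive semidefinite square root of the positive semidefinite matrix I/2 + A/4. Let θ ∈ [0, 1] and let M ∈ M_n(ℂ) satisfy ‖M − N‖ ≤ θ in ℓ2→ℓ2 operator norm. Then for every density operator ρ ∈ M_n(ℂ) (positive semidefinite with trace 1): | tr(M† M ρ) − (1/8 + tr(A ρ)/16) | ≤ 2θ, where tr(M†Mρ) and tr(Aρ) are real. (Thus measuring the ancilla of an approximate block-encoding of (I/2 + A/4)^{1/2} accepts with probability approximately 1/8 + tr(Aρ)/16, which yields an almost unbiased estimator of tr(Aρ).) -/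
/-!
With `P = I/2 + A/4` and `N = P^{1/2}/2` we have `N†N = P/4`, so the quantity to bound is
`tr((M†M - N†N) ρ)`. Since `0 ⪯ P ⪯ I`, `‖N‖ ≤ 1/2`, and writing `M = N + E` gives
`‖M†M - N†N‖ ≤ (2‖N‖ + ‖E‖)‖E‖ ≤ 2θ`. Finally a self-adjoint `D` satisfies
`-‖D‖ ⪯ D ⪯ ‖D‖`, and `X ↦ tr(Xρ)` is monotone for a density operator `ρ`
(as `tr(Xρ) = tr(ρ^{1/2} X ρ^{1/2})`), whence `|tr(Dρ)| ≤ ‖D‖`.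
-/

open Matrix BigOperators
open scoped ComplexOrder

/-- The ℓ2→ℓ2 operator norm of a complex matrix. -/
noncomputable def l2opNorm {m n : Type*} [Fintype m] [Fintype n] [DecidableEq n]
    (A : Matrix m n ℂ) : ℝ :=
  ‖LinearMap.toContinuousLinearMap (Matrix.toEuclideanLin A)‖

open scoped MatrixOrder Matrix.Norms.L2Operator

lemma norm_star_mul_self_sub_star_mul_self_le {E : Type*} [NormedRing E] [StarRing E]
    [NormedStarGroup E] (a b : E) :
    ‖star a * a - star b * b‖ ≤ (2 * ‖b‖ + ‖a - b‖) * ‖a - b‖ := by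
  have hsplit : star a * a - star b * b =
      star b * (a - b) + star (a - b) * b + star (a - b) * (a - b) := by
    simp only [star_sub]
    noncomm_ring
  rw [hsplit]
  calc _ ≤ ‖star b * (a - b)‖ + ‖star (a - b) * b‖ + ‖star (a - b) * (a - b)‖ :=
        norm_add₃_le
    _ ≤ ‖b‖ * ‖a - b‖ + ‖a - b‖ * ‖b‖ + ‖a - b‖ * ‖a - b‖ := by
      gcongr <;> refine (norm_mul_le _ _).trans_eq ?_ <;> simp only [norm_star]
    _ = _ := by ring

lemma CFC.norm_sqrt_le_one {A : Type*} [CStarAlgebra A] [PartialOrder A] [StarOrderedRing A]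
    {a : A} (ha₀ : 0 ≤ a) (ha₁ : a ≤ 1) : ‖CFC.sqrt a‖ ≤ 1 := by
  rw [CFC.norm_sqrt a]
  exact Real.sqrt_le_one.mpr ((CStarAlgebra.norm_le_one_iff_of_nonneg a).mpr ha₁)

namespace Matrix

variable {n : Type*} [Fintype n]

lemma IsHermitian.im_trace_mul_eq_zero {X Y : Matrix n n ℂ} (hX : X.IsHermitian)
    (hY : Y.IsHermitian) : (X * Y).trace.im = 0 := by
  rw [← Complex.conj_eq_iff_im, ← RCLike.star_def, ← trace_conjTranspose, conjTranspose_mul,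
    hX.eq, hY.eq, trace_mul_comm]

variable [DecidableEq n]

lemma trace_mul_nonneg {X ρ : Matrix n n ℂ} (hX : 0 ≤ X) (hρ : 0 ≤ ρ) :
    0 ≤ (X * ρ).trace := by
  have hconj : (X * ρ).trace = (CFC.sqrt ρ * X * CFC.sqrt ρ).trace := calc
    (X * ρ).trace = (X * CFC.sqrt ρ * CFC.sqrt ρ).trace := by
      rw [mul_assoc, CFC.sqrt_mul_sqrt_self ρ]
    _ = _ := by rw [trace_mul_comm, mul_assoc]
  rw [hconj]
  exact (nonneg_iff_posSemidef.mp
    (conjugate_nonneg_of_nonneg hX (CFC.sqrt_nonneg ρ))).trace_nonneg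

lemma abs_re_trace_mul_le_norm {D ρ : Matrix n n ℂ} (hD : IsSelfAdjoint D) (hρ : 0 ≤ ρ)
    (hρ₁ : ρ.trace = 1) : |(D * ρ).trace.re| ≤ ‖D‖ := by
  have hre : ∀ Y, 0 ≤ Y → 0 ≤ (Y * ρ).trace.re := fun Y hY =>
    (Complex.nonneg_iff.mp (trace_mul_nonneg hY hρ)).1
  have hscalar : (algebraMap ℝ (Matrix n n ℂ) ‖D‖ * ρ).trace.re = ‖D‖ := by
    simp [Algebra.algebraMap_eq_smul_one, hρ₁]
  have hupper := hre _ (sub_nonneg.mpr hD.le_algebraMap_norm_self)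
  have hlower := hre _ (sub_nonneg.mpr hD.neg_algebraMap_norm_le_self)
  rw [sub_mul, trace_sub, Complex.sub_re, hscalar] at hupper
  rw [sub_neg_eq_add, add_mul, trace_add, Complex.add_re, hscalar] at hlower
  exact abs_le.mpr ⟨by linarith, by linarith⟩

lemma PosSemidef.sqrt_eq_eigenvectorUnitary_mul_diagonal {P : Matrix n n ℂ}
    (hP : P.PosSemidef) :
    CFC.sqrt P = (hP.1.eigenvectorUnitary : Matrix n n ℂ) *
      diagonal ((↑) ∘ Real.sqrt ∘ hP.1.eigenvalues) *
      (star hP.1.eigenvectorUnitary : Matrix n n ℂ) := by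
  rw [CFC.sqrt_eq_real_sqrt P (nonneg_iff_posSemidef.mpr hP), cfcₙ_eq_cfc, hP.1.cfc_eq,
    IsHermitian.cfc, Unitary.conjStarAlgAut_apply]
  rfl

end Matrix

theorem trace_estimator_from_sqrt_block_encoding_general
    (n : ℕ) (A : Matrix (Fin n) (Fin n) ℂ) (hA : A.IsHermitian)
    (hA₂ : ((1 : Matrix (Fin n) (Fin n) ℂ) - A).PosSemidef)
    (hP : ((2 : ℂ)⁻¹ • (1 : Matrix (Fin n) (Fin n) ℂ) + (4 : ℂ)⁻¹ • A).PosSemidef)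
    (N M : Matrix (Fin n) (Fin n) ℂ)
    (hN : N = (2 : ℂ)⁻¹ • ((hP.1.eigenvectorUnitary : Matrix (Fin n) (Fin n) ℂ) *
      diagonal ((↑) ∘ Real.sqrt ∘ hP.1.eigenvalues) *
      (star hP.1.eigenvectorUnitary : Matrix (Fin n) (Fin n) ℂ)))
    (θ : ℝ) (hθ₁ : θ ≤ 1)
    (hM : l2opNorm (M - N) ≤ θ) :
    ∀ ρ : Matrix (Fin n) (Fin n) ℂ, ρ.PosSemidef → ρ.trace = 1 →
      ((Mᴴ * M * ρ).trace).im = 0 ∧ ((A * ρ).trace).im = 0 ∧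
      |((Mᴴ * M * ρ).trace).re - (1 / 8 + ((A * ρ).trace).re / 16)| ≤ 2 * θ := by
  intro ρ hρ hρ₁
  set P := (2 : ℂ)⁻¹ • (1 : Matrix (Fin n) (Fin n) ℂ) + (4 : ℂ)⁻¹ • A with hPdef
  have hP₁ : P ≤ 1 := by
    have h : 1 - P = (4 : ℂ)⁻¹ • (1 - A) + (4 : ℂ)⁻¹ • 1 := by rw [hPdef]; module
    exact le_iff.mpr (h ▸ (hA₂.smul (by positivity)).add (PosSemidef.one.smul (by positivity)))
  rw [← hP.sqrt_eq_eigenvectorUnitary_mul_diagonal] at hN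
  have hN_norm : ‖N‖ ≤ 2⁻¹ := by
    rw [hN, norm_smul, norm_inv, RCLike.norm_ofNat]
    exact mul_le_of_le_one_right (by norm_num)
      (CFC.norm_sqrt_le_one (nonneg_iff_posSemidef.mpr hP) hP₁)
  have hNN : star N * N = (4 : ℂ)⁻¹ • P := by
    rw [hN, star_smul, (CFC.sqrt_nonneg P).isSelfAdjoint.star_eq, smul_mul_smul_comm,
      CFC.sqrt_mul_sqrt_self P]
    norm_num
  have hE : ‖M - N‖ ≤ θ := hM
  have hD : ‖star M * M - star N * N‖ ≤ 2 * θ :=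
    (norm_star_mul_self_sub_star_mul_self_le M N).trans (by nlinarith [norm_nonneg (M - N)])
  have htr : ((star M * M - star N * N) * ρ).trace =
      (Mᴴ * M * ρ).trace - (1 / 8 + (A * ρ).trace / 16) := by
    rw [hNN, hPdef]
    simp only [star_eq_conjTranspose, smul_add, sub_mul, add_mul, smul_mul_assoc, one_mul,
      trace_sub, trace_add, trace_smul, hρ₁, smul_eq_mul]
    ring
  have hAρ := hA.im_trace_mul_eq_zero hρ.1
  refine ⟨(isHermitian_conjTranspose_mul_self M).im_trace_mul_eq_zero hρ.1, hAρ, ?_⟩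
  have hbound := abs_re_trace_mul_le_norm (.sub (.star_mul_self M) (.star_mul_self N))
    (nonneg_iff_posSemidef.mpr hρ) hρ₁
  rw [htr] at hbound
  simpa [hAρ] using hbound.trans hD

theorem trace_estimator_from_sqrt_block_encoding
    (n : ℕ) (A : Matrix (Fin n) (Fin n) ℂ) (hA : A.IsHermitian)
    (hA₁ : (A + 1).PosSemidef)
    (hA₂ : ((1 : Matrix (Fin n) (Fin n) ℂ) - A).PosSemidef)
    (hP : ((2 : ℂ)⁻¹ • (1 : Matrix (Fin n) (Fin n) ℂ) + (4 : ℂ)⁻¹ • A).PosSemidef)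
    (N M : Matrix (Fin n) (Fin n) ℂ)
    (hN : N = (2 : ℂ)⁻¹ • ((hP.1.eigenvectorUnitary : Matrix (Fin n) (Fin n) ℂ) *
      diagonal ((↑) ∘ Real.sqrt ∘ hP.1.eigenvalues) *
      (star hP.1.eigenvectorUnitary : Matrix (Fin n) (Fin n) ℂ)))
    (θ : ℝ) (hθ₀ : 0 ≤ θ) (hθ₁ : θ ≤ 1)
    (hM : l2opNorm (M - N) ≤ θ) :
    ∀ ρ : Matrix (Fin n) (Fin n) ℂ, ρ.PosSemidef → ρ.trace = 1 →
      ((Mᴴ * M * ρ).trace).im = 0 ∧ ((A * ρ).trace).im = 0 ∧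
      |((Mᴴ * M * ρ).trace).re - (1 / 8 + ((A * ρ).trace).re / 16)| ≤ 2 * θ :=
  trace_estimator_from_sqrt_block_encoding_general n A hA hA₂ hP N M hN θ hθ₁ hM
end
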